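/- arXiv:2202.13988 — 4 statements merged into one kernel-verified Lean document; each statement's English description precedes it below -/
import Mathlib

section
/- Let Z be a standard normal random variable and for z ∈ ℝ let m(z) = E[Z - z | Z > z] denote the mean of the conditioned overshoot. Then for all z > 1, one has 1/z - 2/z³ < m(z) < 1/z. -/
open MeasureTheory Set

/-- The conditional mean overshoot `m z = E[Z - z | Z > z]` for a standard normal `Z`. -/
noncomputable def condMean (z : ℝ) : ℝ :=
  Real.exp (-z ^ 2 / 2) / (∫ t in Set.Ioi z, Real.exp (-t ^ 2 / 2)) - z

/-!
Write `R z = ∫_z^∞ e^{-t²/2} dt`, so that `condMean z = e^{-z²/2} / R z - z`. For a function `h`,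
`d/dt (-e^{-t²/2} h t) = e^{-t²/2} (t h t - h' t)`. With `h t = t / (t² + 1)` the bracket is
`1 - 2 / (t² + 1)² < 1`, and with `h t = (t² + 2) / (t³ + 3t)` it is `1 + 6 / (t³ + 3t)² > 1`.
Integrating over `(z, ∞)` therefore squeezes `R z` between `e^{-z²/2} h z` for these two `h`, i.e.
`z + 1/z > e^{-z²/2} / R z > (z³ + 3z) / (z² + 2)`, and `(z³ + 3z) / (z² + 2) > z + 1/z - 2/z³`.
-/

open Filter Topology Real

lemma setIntegral_Ioi_pos {g : ℝ → ℝ} {a : ℝ} (hg : IntegrableOn g (Ioi a))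
    (hpos : ∀ x ∈ Ioi a, 0 < g x) : 0 < ∫ x in Ioi a, g x := by
  refine (setIntegral_pos_iff_support_of_nonneg_ae ?_ hg).mpr ?_
  · exact (ae_restrict_iff' measurableSet_Ioi).mpr (ae_of_all _ fun x hx => (hpos x hx).le)
  · have hsupp : Ioi a ⊆ Function.support g ∩ Ioi a := fun x hx => ⟨(hpos x hx).ne', hx⟩
    exact lt_of_lt_of_le (by simp) (measure_mono hsupp)

section Comparison

variable {f F F' : ℝ → ℝ} {a : ℝ}

lemma neg_lt_integral_Ioi_of_hasDerivAt (hF : ∀ x ∈ Ici a, HasDerivAt F (F' x) x)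
    (hF' : IntegrableOn F' (Ioi a)) (hFtop : Tendsto F atTop (𝓝 0)) (hf : IntegrableOn f (Ioi a))
    (hlt : ∀ x ∈ Ioi a, F' x < f x) : -F a < ∫ x in Ioi a, f x := by
  have hFTC : ∫ x in Ioi a, F' x = -F a := by
    rw [integral_Ioi_of_hasDerivAt_of_tendsto' hF hF' hFtop, zero_sub]
  have hgap : 0 < ∫ x in Ioi a, (f x - F' x) :=
    setIntegral_Ioi_pos (hf.sub hF') fun x hx => sub_pos.mpr (hlt x hx)
  rw [integral_sub hf hF', hFTC] at hgap
  linarith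

lemma integral_Ioi_lt_neg_of_hasDerivAt (hF : ∀ x ∈ Ici a, HasDerivAt F (F' x) x)
    (hF' : IntegrableOn F' (Ioi a)) (hFtop : Tendsto F atTop (𝓝 0)) (hf : IntegrableOn f (Ioi a))
    (hlt : ∀ x ∈ Ioi a, f x < F' x) : ∫ x in Ioi a, f x < -F a := by
  have h := neg_lt_integral_Ioi_of_hasDerivAt (f := fun x => -f x) (F := fun x => -F x)
    (fun x hx => (hF x hx).neg) hF'.neg (by simpa using hFtop.neg) hf.neg
    fun x hx => neg_lt_neg (hlt x hx)
  rw [integral_neg] at h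
  linarith

end Comparison

lemma integrable_exp_neg_sq_div_two : Integrable fun t : ℝ => exp (-t ^ 2 / 2) := by
  simpa [neg_div, div_eq_inv_mul, mul_comm] using
    integrable_exp_neg_mul_sq (b := 1 / 2) one_half_pos

lemma tendsto_exp_neg_sq_div_two_atTop : Tendsto (fun t : ℝ => exp (-t ^ 2 / 2)) atTop (𝓝 0) := by
  refine tendsto_exp_atBot.comp ?_
  refine (tendsto_neg_atTop_atBot.comp
    ((tendsto_pow_atTop two_ne_zero).atTop_div_const two_pos)).congr fun t => ?_
  simp [neg_div]

lemma tendsto_neg_exp_neg_sq_div_two_mul {h : ℝ → ℝ} {C : ℝ} (hh : ∀ᶠ t in atTop, |h t| ≤ C) :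
    Tendsto (fun t => -(exp (-t ^ 2 / 2) * h t)) atTop (𝓝 0) := by
  simpa using (tendsto_exp_neg_sq_div_two_atTop.zero_mul_isBoundedUnder_le
    (isBoundedUnder_of_eventually_le (a := C) hh)).neg

lemma hasDerivAt_neg_exp_neg_sq_div_two_mul {h : ℝ → ℝ} {h' t : ℝ} (hh : HasDerivAt h h' t) :
    HasDerivAt (fun s => -(exp (-s ^ 2 / 2) * h s)) (exp (-t ^ 2 / 2) * (t * h t - h')) t := by
  have hexp : HasDerivAt (fun s : ℝ => exp (-s ^ 2 / 2)) (exp (-t ^ 2 / 2) * -t) t := by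
    refine (hasDerivAt_exp _).comp t ?_
    exact ((hasDerivAt_pow 2 t).neg.div_const 2).congr_deriv (by ring)
  exact (hexp.mul hh).neg.congr_deriv (by ring)

lemma exp_mul_div_lt_integral_Ioi (z : ℝ) :
    exp (-z ^ 2 / 2) * (z / (z ^ 2 + 1)) < ∫ t in Ioi z, exp (-t ^ 2 / 2) := by
  have hden (t : ℝ) : 0 < t ^ 2 + 1 := by positivity
  have hderiv (t : ℝ) : HasDerivAt (fun s => -(exp (-s ^ 2 / 2) * (s / (s ^ 2 + 1))))
      (exp (-t ^ 2 / 2) * (1 - 2 / (t ^ 2 + 1) ^ 2)) t := by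
    refine (hasDerivAt_neg_exp_neg_sq_div_two_mul (h := fun s => s / (s ^ 2 + 1))
      ((hasDerivAt_id' t).fun_div ((hasDerivAt_pow 2 t).add_const 1) (hden t).ne')).congr_deriv ?_
    field_simp
    ring
  have hbound (t : ℝ) : ‖1 - 2 / (t ^ 2 + 1) ^ 2‖ ≤ 1 := by
    have hpos : 0 < 2 / (t ^ 2 + 1) ^ 2 := by positivity
    have hle : 2 / (t ^ 2 + 1) ^ 2 ≤ 2 :=
      div_le_self zero_le_two (one_le_pow₀ (by nlinarith))
    rw [Real.norm_eq_abs, abs_le]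
    constructor <;> linarith
  have hint : IntegrableOn (fun t => exp (-t ^ 2 / 2) * (1 - 2 / (t ^ 2 + 1) ^ 2)) (Ioi z) :=
    (integrable_exp_neg_sq_div_two.mul_bdd
      (by fun_prop : Measurable fun t : ℝ => 1 - 2 / (t ^ 2 + 1) ^ 2).aestronglyMeasurable
      (ae_of_all _ hbound)).integrableOn
  have htend := tendsto_neg_exp_neg_sq_div_two_mul (h := fun t => t / (t ^ 2 + 1)) (C := 1) <|
    Eventually.of_forall fun t => by
      rw [abs_div, abs_of_pos (hden t), div_le_one (hden t)]
      nlinarith [abs_mul_abs_self t, abs_nonneg t]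
  have hlt (t : ℝ) : exp (-t ^ 2 / 2) * (1 - 2 / (t ^ 2 + 1) ^ 2) < exp (-t ^ 2 / 2) := by
    have := div_pos two_pos (pow_pos (hden t) 2)
    nlinarith [exp_pos (-t ^ 2 / 2)]
  simpa using neg_lt_integral_Ioi_of_hasDerivAt (fun t _ => hderiv t) hint htend
    integrable_exp_neg_sq_div_two.integrableOn fun t _ => hlt t

lemma integral_Ioi_lt_exp_mul_div {z : ℝ} (hz : 0 < z) :
    ∫ t in Ioi z, exp (-t ^ 2 / 2) < exp (-z ^ 2 / 2) * ((z ^ 2 + 2) / (z ^ 3 + 3 * z)) := by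
  have hderiv : ∀ t ∈ Ici z, HasDerivAt
      (fun s => -(exp (-s ^ 2 / 2) * ((s ^ 2 + 2) / (s ^ 3 + 3 * s))))
      (exp (-t ^ 2 / 2) * (1 + 6 / (t ^ 3 + 3 * t) ^ 2)) t := by
    intro t ht
    have ht0 : 0 < t := hz.trans_le ht
    have hden : t ^ 3 + 3 * t ≠ 0 := by positivity
    have hq := ((hasDerivAt_pow 2 t).add_const 2).fun_div
      ((hasDerivAt_pow 3 t).fun_add ((hasDerivAt_id' t).const_mul 3)) hden
    refine (hasDerivAt_neg_exp_neg_sq_div_two_mul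
      (h := fun s => (s ^ 2 + 2) / (s ^ 3 + 3 * s)) hq).congr_deriv ?_
    field_simp
    ring
  have htend := tendsto_neg_exp_neg_sq_div_two_mul
    (h := fun t => (t ^ 2 + 2) / (t ^ 3 + 3 * t)) (C := 1) <| by
      filter_upwards [eventually_ge_atTop 1] with t ht
      have hden : 0 < t ^ 3 + 3 * t := by positivity
      rw [abs_div, abs_of_pos (by positivity), abs_of_pos hden, div_le_one hden]
      nlinarith
  have hnonneg : ∀ t ∈ Ioi z, 0 ≤ exp (-t ^ 2 / 2) * (1 + 6 / (t ^ 3 + 3 * t) ^ 2) :=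
    fun t _ => by positivity
  have hlt : ∀ t ∈ Ioi z, exp (-t ^ 2 / 2) < exp (-t ^ 2 / 2) * (1 + 6 / (t ^ 3 + 3 * t) ^ 2) := by
    intro t ht
    have : 0 < 6 / (t ^ 3 + 3 * t) ^ 2 := by
      have : 0 < t := hz.trans ht
      positivity
    nlinarith [exp_pos (-t ^ 2 / 2)]
  simpa using integral_Ioi_lt_neg_of_hasDerivAt hderiv
    (integrableOn_Ioi_deriv_of_nonneg' hderiv hnonneg htend) htend
    integrable_exp_neg_sq_div_two.integrableOn hlt

theorem condMean_bounds_pos :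
    ∀ z : ℝ, 1 < z → 1 / z - 2 / z ^ 3 < condMean z ∧ condMean z < 1 / z := by
  intro z hz
  have hz0 : 0 < z := by linarith
  set e := exp (-z ^ 2 / 2)
  set R := ∫ t in Ioi z, exp (-t ^ 2 / 2)
  have hlower : e * (z / (z ^ 2 + 1)) < R := exp_mul_div_lt_integral_Ioi z
  have hupper : R < e * ((z ^ 2 + 2) / (z ^ 3 + 3 * z)) := integral_Ioi_lt_exp_mul_div hz0
  have hR : 0 < R := lt_trans (by positivity) hlower
  show 1 / z - 2 / z ^ 3 < e / R - z ∧ e / R - z < 1 / z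
  constructor
  · have hratio : (z ^ 3 + 3 * z) / (z ^ 2 + 2) < e / R := by
      rw [mul_div_assoc', lt_div_iff₀ (by positivity)] at hupper
      rw [div_lt_div_iff₀ (by positivity) hR]
      linarith
    have hrational : 1 / z - 2 / z ^ 3 + z < (z ^ 3 + 3 * z) / (z ^ 2 + 2) := by
      rw [div_sub_div _ _ hz0.ne' (by positivity), div_add' _ _ _ (by positivity),
        div_lt_div_iff₀ (by positivity) (by positivity)]
      nlinarith [pow_pos hz0 4]
    linarith
  · have hratio : e / R < (z ^ 2 + 1) / z := by
      rw [mul_div_assoc', div_lt_iff₀ (by positivity)] at hlower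
      rw [div_lt_div_iff₀ hR hz0]
      linarith
    rw [add_div, sq, mul_self_div_self] at hratio
    linarith
end

section
/- Let Z be a standard normal random variable and m(z) = E[Z - z | Z > z]. Then for all z < 0 one has max{|z|, √(2/π)} < m(z) < √(2/π) + |z|. -/
open MeasureTheory Set

namespace Gaussian

noncomputable def tailIntegral (z : ℝ) : ℝ :=
  ∫ t in Ioi z, Real.exp (-t ^ 2 / 2)

lemma condMean_eq (z : ℝ) : condMean z = Real.exp (-z ^ 2 / 2) / tailIntegral z - z := rfl

lemma integrable_exp_neg_sq_div_two : Integrable fun t : ℝ => Real.exp (-t ^ 2 / 2) := by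
  convert integrable_exp_neg_mul_sq (by norm_num : (0 : ℝ) < 1 / 2) using 2 with t
  ring_nf

lemma tailIntegral_pos (z : ℝ) : 0 < tailIntegral z := by
  rw [tailIntegral, setIntegral_pos_iff_support_of_nonneg_ae
    (.of_forall fun t => (Real.exp_pos _).le) integrable_exp_neg_sq_div_two.integrableOn]
  simp [Function.support, Real.exp_ne_zero, Real.volume_Ioi]

lemma tailIntegral_zero : tailIntegral 0 = Real.sqrt (Real.pi / 2) := by
  have h : tailIntegral 0 = ∫ t in Ioi 0, Real.exp (-(1 / 2) * t ^ 2) := by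
    simp only [tailIntegral, neg_div, neg_mul, one_div_mul_eq_div]
  rw [h, integral_gaussian_Ioi, show Real.pi / (1 / 2) = Real.pi / 2 * 2 ^ 2 by ring,
    Real.sqrt_mul (by positivity), Real.sqrt_sq zero_le_two, mul_div_cancel_right₀ _ two_ne_zero]

lemma tailIntegral_eq_integral_Ioc_add {a b : ℝ} (hab : a ≤ b) :
    tailIntegral a = (∫ t in Ioc a b, Real.exp (-t ^ 2 / 2)) + tailIntegral b := by
  rw [tailIntegral, tailIntegral, ← setIntegral_union (Ioc_disjoint_Ioi le_rfl) measurableSet_Ioi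
    integrable_exp_neg_sq_div_two.integrableOn integrable_exp_neg_sq_div_two.integrableOn,
    Ioc_union_Ioi_eq_Ioi hab]

lemma tailIntegral_antitone : Antitone tailIntegral := fun a b hab => by
  rw [tailIntegral_eq_integral_Ioc_add hab, le_add_iff_nonneg_left]
  exact setIntegral_nonneg measurableSet_Ioc fun t _ => (Real.exp_pos _).le

lemma tailIntegral_le_add_sub {a b : ℝ} (hab : a ≤ b) :
    tailIntegral a ≤ tailIntegral b + (b - a) := by
  have hIoc : (∫ t in Ioc a b, Real.exp (-t ^ 2 / 2)) ≤ ∫ _ in Ioc a b, (1 : ℝ) :=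
    setIntegral_mono_on integrable_exp_neg_sq_div_two.integrableOn
      (integrableOn_const measure_Ioc_lt_top.ne) measurableSet_Ioc
      fun t _ => Real.exp_le_one_iff.mpr (by nlinarith [sq_nonneg t])
  rw [setIntegral_const, smul_eq_mul, mul_one, Real.volume_real_Ioc_of_le hab] at hIoc
  rw [tailIntegral_eq_integral_Ioc_add hab]
  linarith

end Gaussian

lemma Real.sqrt_two_div_pi_mul_sqrt_pi_div_two :
    Real.sqrt (2 / Real.pi) * Real.sqrt (Real.pi / 2) = 1 := by
  rw [← Real.sqrt_mul (by positivity), div_mul_div_comm, mul_comm 2,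
    div_self (by positivity), Real.sqrt_one]

lemma Real.sqrt_two_div_pi_lt_sqrt_pi_div_two :
    Real.sqrt (2 / Real.pi) < Real.sqrt (Real.pi / 2) := by
  apply Real.sqrt_lt_sqrt (by positivity)
  rw [div_lt_div_iff₀ Real.pi_pos two_pos]
  nlinarith [Real.pi_gt_three]

open Gaussian

lemma neg_lt_condMean (z : ℝ) : -z < condMean z := by
  rw [condMean_eq, neg_lt_sub_iff_lt_add, lt_add_iff_pos_right]
  exact div_pos (Real.exp_pos _) (tailIntegral_pos z)

lemma condMean_lt_sqrt_two_div_pi_sub {z : ℝ} (hz : z < 0) :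
    condMean z < Real.sqrt (2 / Real.pi) - z := by
  have htail : Real.sqrt (Real.pi / 2) ≤ tailIntegral z :=
    tailIntegral_zero ▸ tailIntegral_antitone hz.le
  rw [condMean_eq, sub_lt_sub_iff_right, div_lt_iff₀ (tailIntegral_pos z)]
  calc Real.exp (-z ^ 2 / 2) < 1 := Real.exp_lt_one_iff.mpr (by nlinarith)
    _ = Real.sqrt (2 / Real.pi) * Real.sqrt (Real.pi / 2) :=
      Real.sqrt_two_div_pi_mul_sqrt_pi_div_two.symm
    _ ≤ Real.sqrt (2 / Real.pi) * tailIntegral z := by gcongr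

lemma sqrt_two_div_pi_lt_condMean {z : ℝ} (hz : z < 0) :
    Real.sqrt (2 / Real.pi) < condMean z := by
  set c := Real.sqrt (2 / Real.pi)
  set S := Real.sqrt (Real.pi / 2)
  suffices (z + c) * tailIntegral z < Real.exp (-z ^ 2 / 2) by
    rw [condMean_eq, lt_sub_iff_add_lt', lt_div_iff₀ (tailIntegral_pos z)]
    exact this
  rcases le_or_gt (z + c) 0 with hzc | hzc
  · exact (mul_nonpos_of_nonpos_of_nonneg hzc (tailIntegral_pos z).le).trans_lt (Real.exp_pos _)
  have htail : tailIntegral z ≤ S - z := by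
    linarith [tailIntegral_zero ▸ tailIntegral_le_add_sub hz.le]
  have hcS : c * S = 1 := Real.sqrt_two_div_pi_mul_sqrt_pi_div_two
  have hgap : 0 < -z * (S - c) :=
    mul_pos (neg_pos.mpr hz) (sub_pos.mpr Real.sqrt_two_div_pi_lt_sqrt_pi_div_two)
  calc (z + c) * tailIntegral z ≤ (z + c) * (S - z) := by gcongr
    _ = 1 - z ^ 2 - -z * (S - c) := by linear_combination hcS
    _ < 1 - z ^ 2 / 2 := by linarith [sq_nonneg z]
    _ ≤ Real.exp (-z ^ 2 / 2) := by linarith [Real.add_one_le_exp (-z ^ 2 / 2)]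

theorem condMean_bounds_neg :
    ∀ z : ℝ, z < 0 →
      max |z| (Real.sqrt (2 / Real.pi)) < condMean z ∧
      condMean z < Real.sqrt (2 / Real.pi) + |z| := by
  intro z hz
  rw [abs_of_neg hz, ← sub_eq_add_neg]
  exact ⟨max_lt (neg_lt_condMean z) (sqrt_two_div_pi_lt_condMean hz),
    condMean_lt_sqrt_two_div_pi_sub hz⟩
end

section
/- The function m(z) = E[Z - z | Z > z], where Z is standard normal, is strictly decreasing on ℝ. -/
/-!
With `φ z = exp (-z² / 2)` and `Φ̄ z = ∫_z^∞ φ`, one has `m = φ / Φ̄ - z`, `φ' = -z φ`, `Φ̄' = -φ`, and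
`m' < 0` amounts to `φ² < Φ̄² + z φ Φ̄`. This inequality and the lower Mills bound `z φ < (1 + z²) Φ̄`
are proved alike: the difference of the two sides tends to `0` at `+∞` and has the negative
derivatives `-φ ((1 + z²) Φ̄ - z φ)` and `2 (z Φ̄ - φ)` respectively. The second is negative by the
upper Mills bound `z Φ̄ < φ`, i.e. `∫_z^∞ (t - z) φ t dt > 0`, the first by the lower one.
-/

open MeasureTheory Set

open Filter Topology

theorem StrictAnti.lt_of_tendsto_atTop {α β : Type*} [TopologicalSpace α] [Preorder α]
    [OrderClosedTopology α] [SemilatticeSup β] [NoMaxOrder β] {f : β → α} {a : α}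
    (hf : StrictAnti f) (ha : Tendsto f atTop (𝓝 a)) (b : β) : a < f b := by
  obtain ⟨c, hbc⟩ := exists_gt b
  exact (hf.antitone.le_of_tendsto ha c).trans_lt (hf hbc)

theorem pos_of_hasDerivAt_neg_of_tendsto_zero {g g' : ℝ → ℝ}
    (hg : ∀ x, HasDerivAt g (g' x) x) (hg' : ∀ x, g' x < 0) (hlim : Tendsto g atTop (𝓝 0))
    (x : ℝ) : 0 < g x :=
  (strictAnti_of_deriv_neg fun y => (hg y).deriv ▸ hg' y).lt_of_tendsto_atTop hlim x

theorem hasDerivAt_setIntegral_Ioi {E : Type*} [NormedAddCommGroup E] [NormedSpace ℝ E]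
    [CompleteSpace E] {f : ℝ → E} (hf : Continuous f) (hfi : Integrable f)
    (z : ℝ) : HasDerivAt (fun u => ∫ t in Ioi u, f t) (-f z) z := by
  have htail : (fun u => ∫ t in Ioi u, f t) = fun u => (∫ t in Ioi 0, f t) - ∫ t in 0..u, f t := by
    funext u
    rw [← intervalIntegral.integral_Ioi_sub_Ioi' hfi.integrableOn hfi.integrableOn, sub_sub_cancel]
  rw [htail]
  exact (hf.integral_hasStrictDerivAt 0 z).hasDerivAt.const_sub _

theorem setIntegral_pos_of_pos_on {X : Type*} [MeasurableSpace X] {μ : Measure X} {s : Set X}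
    {f : X → ℝ} (hs : MeasurableSet s) (hμs : 0 < μ s) (hf : ∀ x ∈ s, 0 < f x)
    (hfi : IntegrableOn f s μ) : 0 < ∫ x in s, f x ∂μ := by
  rw [setIntegral_pos_iff_support_of_nonneg_ae
    (ae_restrict_of_forall_mem hs fun x hx => (hf x hx).le) hfi]
  have hsupp : Function.support f ∩ s = s := inter_eq_right.2 fun x hx => (hf x hx).ne'
  rwa [hsupp]

noncomputable def expNegSqHalf (z : ℝ) : ℝ := Real.exp (-z ^ 2 / 2)

noncomputable def gaussTail (z : ℝ) : ℝ := ∫ t in Ioi z, expNegSqHalf t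

theorem expNegSqHalf_eq_exp_neg_mul_sq : expNegSqHalf = fun z => Real.exp (-(1 / 2) * z ^ 2) := by
  funext z; rw [expNegSqHalf]; ring_nf

theorem expNegSqHalf_pos (z : ℝ) : 0 < expNegSqHalf z := Real.exp_pos _

theorem continuous_expNegSqHalf : Continuous expNegSqHalf := by
  unfold expNegSqHalf; fun_prop

theorem integrable_expNegSqHalf : Integrable expNegSqHalf := by
  rw [expNegSqHalf_eq_exp_neg_mul_sq]; exact integrable_exp_neg_mul_sq one_half_pos

theorem integrable_mul_expNegSqHalf : Integrable fun t => t * expNegSqHalf t := by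
  rw [expNegSqHalf_eq_exp_neg_mul_sq]; exact integrable_mul_exp_neg_mul_sq one_half_pos

theorem hasDerivAt_expNegSqHalf (z : ℝ) : HasDerivAt expNegSqHalf (-z * expNegSqHalf z) z := by
  have hexponent : HasDerivAt (fun x : ℝ => -x ^ 2 / 2) (-z) z :=
    ((hasDerivAt_pow 2 z).fun_neg.div_const 2).congr_deriv (by ring)
  unfold expNegSqHalf
  simpa only [mul_comm] using hexponent.exp

theorem tendsto_pow_mul_expNegSqHalf_atTop (n : ℕ) :
    Tendsto (fun z => z ^ n * expNegSqHalf z) atTop (𝓝 0) := by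
  have hexp : Tendsto (fun x : ℝ => Real.exp (-(1 / 2) * x)) atTop (𝓝 0) :=
    Real.tendsto_exp_atBot.comp (tendsto_id.const_mul_atTop_of_neg (by norm_num))
  refine ((rpow_mul_exp_neg_mul_sq_isLittleO_exp_neg one_half_pos n).trans_tendsto hexp).congr
    fun z => ?_
  rw [Real.rpow_natCast, expNegSqHalf_eq_exp_neg_mul_sq]

theorem tendsto_expNegSqHalf_atTop : Tendsto expNegSqHalf atTop (𝓝 0) := by
  simpa using tendsto_pow_mul_expNegSqHalf_atTop 0

theorem tendsto_mul_expNegSqHalf_atTop : Tendsto (fun z => z * expNegSqHalf z) atTop (𝓝 0) := by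
  simpa using tendsto_pow_mul_expNegSqHalf_atTop 1

theorem gaussTail_pos (z : ℝ) : 0 < gaussTail z :=
  setIntegral_pos_of_pos_on measurableSet_Ioi (by simp) (fun t _ => expNegSqHalf_pos t)
    integrable_expNegSqHalf.integrableOn

theorem hasDerivAt_gaussTail (z : ℝ) : HasDerivAt gaussTail (-expNegSqHalf z) z :=
  hasDerivAt_setIntegral_Ioi continuous_expNegSqHalf integrable_expNegSqHalf z

theorem integral_Ioi_mul_expNegSqHalf (z : ℝ) :
    ∫ t in Ioi z, t * expNegSqHalf t = expNegSqHalf z := by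
  have hftc := integral_Ioi_of_hasDerivAt_of_tendsto' (f := fun t => -expNegSqHalf t) (a := z)
    (fun t _ => (hasDerivAt_expNegSqHalf t).neg.congr_deriv (by ring))
    integrable_mul_expNegSqHalf.integrableOn (by simpa using tendsto_expNegSqHalf_atTop.neg)
  simpa using hftc

theorem mul_gaussTail_lt_expNegSqHalf (z : ℝ) : z * gaussTail z < expNegSqHalf z := by
  have hmoment : ∫ t in Ioi z, (t - z) * expNegSqHalf t = expNegSqHalf z - z * gaussTail z := by
    simp_rw [sub_mul]
    rw [integral_sub integrable_mul_expNegSqHalf.integrableOn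
      (integrable_expNegSqHalf.const_mul z).integrableOn, integral_Ioi_mul_expNegSqHalf,
      integral_const_mul, gaussTail]
  have hpos : 0 < ∫ t in Ioi z, (t - z) * expNegSqHalf t :=
    setIntegral_pos_of_pos_on measurableSet_Ioi (by simp)
      (fun t ht => mul_pos (sub_pos.2 ht) (expNegSqHalf_pos t))
      ((integrable_mul_expNegSqHalf.sub (integrable_expNegSqHalf.const_mul z)).integrableOn.congr_fun
        (fun t _ => (sub_mul t z _).symm) measurableSet_Ioi)
  linarith

theorem tendsto_gaussTail_atTop : Tendsto gaussTail atTop (𝓝 0) := by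
  refine tendsto_of_tendsto_of_tendsto_of_le_of_le' tendsto_const_nhds tendsto_expNegSqHalf_atTop
    (.of_forall fun z => (gaussTail_pos z).le) ?_
  filter_upwards [eventually_ge_atTop 1] with z hz
  nlinarith [mul_gaussTail_lt_expNegSqHalf z, gaussTail_pos z]

theorem tendsto_sq_mul_gaussTail_atTop : Tendsto (fun z => z ^ 2 * gaussTail z) atTop (𝓝 0) := by
  refine tendsto_of_tendsto_of_tendsto_of_le_of_le' tendsto_const_nhds
    tendsto_mul_expNegSqHalf_atTop ?_ ?_
  · filter_upwards with z
    exact mul_nonneg (sq_nonneg z) (gaussTail_pos z).le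
  · filter_upwards [eventually_ge_atTop 0] with z hz
    nlinarith [mul_gaussTail_lt_expNegSqHalf z, gaussTail_pos z]

theorem mul_expNegSqHalf_lt_one_add_sq_mul_gaussTail (z : ℝ) :
    z * expNegSqHalf z < (1 + z ^ 2) * gaussTail z := by
  have hderiv (x : ℝ) : HasDerivAt (fun x => (1 + x ^ 2) * gaussTail x - x * expNegSqHalf x)
      (2 * (x * gaussTail x - expNegSqHalf x)) x := by
    have := (((hasDerivAt_pow 2 x).const_add 1).mul (hasDerivAt_gaussTail x)).sub
      ((hasDerivAt_id x).mul (hasDerivAt_expNegSqHalf x))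
    exact this.congr_deriv (by simp only [id_eq]; push_cast; ring)
  have hlim : Tendsto (fun x => (1 + x ^ 2) * gaussTail x - x * expNegSqHalf x) atTop (𝓝 0) := by
    simpa [add_mul] using
      (tendsto_gaussTail_atTop.add tendsto_sq_mul_gaussTail_atTop).sub tendsto_mul_expNegSqHalf_atTop
  have := pos_of_hasDerivAt_neg_of_tendsto_zero hderiv
    (fun x => by linarith [mul_gaussTail_lt_expNegSqHalf x]) hlim z
  linarith

theorem sq_expNegSqHalf_lt (z : ℝ) :
    expNegSqHalf z ^ 2 < gaussTail z ^ 2 + z * expNegSqHalf z * gaussTail z := by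
  have hderiv (x : ℝ) : HasDerivAt
      (fun x => gaussTail x ^ 2 + x * expNegSqHalf x * gaussTail x - expNegSqHalf x ^ 2)
      (-(expNegSqHalf x * ((1 + x ^ 2) * gaussTail x - x * expNegSqHalf x))) x := by
    have := (((hasDerivAt_gaussTail x).pow 2).add (((hasDerivAt_id x).mul
      (hasDerivAt_expNegSqHalf x)).mul (hasDerivAt_gaussTail x))).sub
      ((hasDerivAt_expNegSqHalf x).pow 2)
    exact this.congr_deriv (by simp only [id_eq, Pi.mul_apply]; push_cast; ring)
  have hlim : Tendsto
      (fun x => gaussTail x ^ 2 + x * expNegSqHalf x * gaussTail x - expNegSqHalf x ^ 2)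
      atTop (𝓝 0) := by
    simpa using ((tendsto_gaussTail_atTop.pow 2).add
      (tendsto_mul_expNegSqHalf_atTop.mul tendsto_gaussTail_atTop)).sub
      (tendsto_expNegSqHalf_atTop.pow 2)
  have := pos_of_hasDerivAt_neg_of_tendsto_zero hderiv (fun x => neg_neg_of_pos (mul_pos
    (expNegSqHalf_pos x) (sub_pos.2 (mul_expNegSqHalf_lt_one_add_sq_mul_gaussTail x)))) hlim z
  linarith

theorem hasDerivAt_condMean (z : ℝ) : HasDerivAt condMean
    ((expNegSqHalf z ^ 2 - z * expNegSqHalf z * gaussTail z) / gaussTail z ^ 2 - 1) z := by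
  have := ((hasDerivAt_expNegSqHalf z).div (hasDerivAt_gaussTail z) (gaussTail_pos z).ne').sub
    (hasDerivAt_id z)
  exact this.congr_deriv (by field_simp; ring)

theorem condMean_strictAnti : StrictAnti condMean := by
  refine strictAnti_of_deriv_neg fun z => ?_
  rw [(hasDerivAt_condMean z).deriv, sub_neg, div_lt_one (pow_pos (gaussTail_pos z) 2)]
  linarith [sq_expNegSqHalf_lt z]
end

section
/- Fix β with 0 < β ≤ 1 and let X₀ be a positive random variable with survival function P(X₀ > x) = (1 - (1-β)x)^{β/(1-β)} for 0 < x < 1/(1-β) if β < 1, and P(X₀ > x) = e^{-x} if β = 1. Define X_t = Λ(t)·X₀ where Λ(t) = 1 + βt. Then the family of densities c(x,t) of X_t normalized so that ∫_0^∞ x c(x,t) dx = 1 solves the Carr–Penrose equation ∂c/∂t = ∂/∂x[(1 - x/Λ(t))·c(x,t)] with Λ(t) = ∫_0^∞ x c dx / ∫_0^∞ c dx, i.e., these are self-similar solutions with ⟨X_t⟩ = 1 + βt. -/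
/-!
The substitution `x = Λu` reduces the moments of `c(x,t) = f(x/Λ)/Λ²`, `f = f0CP β`, to
`∫ f = 1` and `∫ u f = 1`: for `β = 1` these are `Γ(1)` and `Γ(2)`; for `β < 1`, with
`p = β/(1-β)` and `w = 1 - (1-β)u`, the functions `-w^p` and `-(u w^p + w^(p+1))` are
antiderivatives of `f` and `u f` on the support (the second because `(1-β)(p+1) = 1`).
Since `Λ' = β`, the ansatz solves the Carr–Penrose equation exactly where the profile satisfies
`(1 - (1-β)u) f' = (1 - 2β) f`, which both branches of `f0CP` do.
-/

open MeasureTheory Set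

/-- The mean `Λ(t) = 1 + β t` of the self-similar solution. -/
noncomputable def LamCP (β t : ℝ) : ℝ := 1 + β * t

/-- The density of the self-similar profile `X₀` with parameter `0 < β ≤ 1`,
obtained from the survival function `P(X₀ > x) = (1-(1-β)x)^{β/(1-β)}`
(for `β < 1`, supported on `(0, 1/(1-β))`) and `P(X₀ > x) = e^{-x}` for `β = 1`. -/
noncomputable def f0CP (β x : ℝ) : ℝ :=
  if β = 1 then Real.exp (-x)
  else if x < 1 / (1 - β) then β * (1 - (1 - β) * x) ^ (β / (1 - β) - 1) else 0

/-- The density of `X_t = Λ(t)·X₀`, normalized so that `∫ x c(x,t) dx = 1`. -/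
noncomputable def cCP (β x t : ℝ) : ℝ := f0CP β (x / LamCP β t) / (LamCP β t) ^ 2

open Real

lemma integral_Ioi_zero_comp_div {E : Type*} [NormedAddCommGroup E] [NormedSpace ℝ E]
    (g : ℝ → E) {Λ : ℝ} (hΛ : 0 < Λ) :
    ∫ x in Ioi (0 : ℝ), g (x / Λ) = Λ • ∫ u in Ioi (0 : ℝ), g u := by
  simp_rw [div_eq_mul_inv]
  rw [integral_comp_mul_right_Ioi g 0 (inv_pos.2 hΛ), zero_mul, inv_inv]

lemma integral_Ioi_zero_rescale (f : ℝ → ℝ) {Λ : ℝ} (hΛ : 0 < Λ) :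
    ∫ x in Ioi (0 : ℝ), f (x / Λ) / Λ ^ 2 = (∫ u in Ioi (0 : ℝ), f u) / Λ := by
  rw [integral_div, integral_Ioi_zero_comp_div f hΛ, smul_eq_mul]
  field_simp

lemma integral_Ioi_zero_mul_rescale (f : ℝ → ℝ) {Λ : ℝ} (hΛ : 0 < Λ) :
    ∫ x in Ioi (0 : ℝ), x * (f (x / Λ) / Λ ^ 2) = ∫ u in Ioi (0 : ℝ), u * f u := by
  have h : ∀ x, x * (f (x / Λ) / Λ ^ 2) = x / Λ * f (x / Λ) / Λ := fun x => by
    field_simp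
  simp_rw [h]
  rw [integral_div, integral_Ioi_zero_comp_div (fun u => u * f u) hΛ, smul_eq_mul]
  field_simp

lemma integral_Ioi_zero_eq_sub_of_hasDerivAt_of_nonneg {g G : ℝ → ℝ} {M : ℝ} (hM : 0 ≤ M)
    (hg : ∀ x, M ≤ x → g x = 0) (hG : ContinuousOn G (Icc 0 M))
    (hG' : ∀ x ∈ Ioo 0 M, HasDerivAt G (g x) x) (hg_nonneg : ∀ x ∈ Ioo 0 M, 0 ≤ g x) :
    ∫ x in Ioi (0 : ℝ), g x = G M - G 0 := by
  rw [setIntegral_eq_of_subset_of_forall_sdiff_eq_zero measurableSet_Ioi Ioc_subset_Ioi_self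
      fun x hx => hg x (not_le.1 fun h => hx.2 ⟨hx.1, h⟩).le,
    ← intervalIntegral.integral_of_le hM]
  exact intervalIntegral.integral_eq_sub_of_hasDerivAt_of_le hM hG hG'
    ((intervalIntegrable_iff_integrableOn_Ioc_of_le hM).2
      (intervalIntegral.integrableOn_deriv_of_nonneg hG hG' hg_nonneg))

section Profile

variable {β : ℝ}

lemma f0CP_of_lt (hβ : β ≠ 1) {u : ℝ} (hu : u < 1 / (1 - β)) :
    f0CP β u = β * (1 - (1 - β) * u) ^ (β / (1 - β) - 1) := by
  rw [f0CP, if_neg hβ, if_pos hu]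

lemma f0CP_of_le (hβ : β ≠ 1) {u : ℝ} (hu : 1 / (1 - β) ≤ u) : f0CP β u = 0 := by
  rw [f0CP, if_neg hβ, if_neg hu.not_gt]

lemma f0CP_one : f0CP 1 = fun u => exp (-u) := by
  funext u
  rw [f0CP, if_pos rfl]

lemma one_sub_mul_pos_of_lt (hβ : β < 1) {u : ℝ} (hu : u < 1 / (1 - β)) :
    0 < 1 - (1 - β) * u := by
  rw [lt_div_iff₀ (by linarith), mul_comm] at hu
  linarith

lemma f0CP_nonneg (hβ0 : 0 ≤ β) (hβ1 : β ≤ 1) (u : ℝ) : 0 ≤ f0CP β u := by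
  rcases hβ1.lt_or_eq with hβ1 | rfl
  · rcases lt_or_ge u (1 / (1 - β)) with hu | hu
    · have := one_sub_mul_pos_of_lt hβ1 hu
      rw [f0CP_of_lt hβ1.ne hu]
      positivity
    · rw [f0CP_of_le hβ1.ne hu]
  · rw [f0CP_one]
    positivity

lemma integral_f0CP_of_lt_one (hβ0 : 0 < β) (hβ1 : β < 1) :
    ∫ u in Ioi (0 : ℝ), f0CP β u = 1 := by
  have ha : 0 < 1 - β := by linarith
  have hp : 0 < β / (1 - β) := div_pos hβ0 ha
  rw [integral_Ioi_zero_eq_sub_of_hasDerivAt_of_nonneg (one_div_pos.2 ha).le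
    (fun u => f0CP_of_le hβ1.ne) (G := fun u => -(1 - (1 - β) * u) ^ (β / (1 - β)))
    (by have := Real.continuous_rpow_const hp.le; fun_prop) ?_
    (fun u _ => f0CP_nonneg hβ0.le hβ1.le u)]
  · simp [ha.ne', hp.ne']
  · intro u hu
    have hw := one_sub_mul_pos_of_lt hβ1 hu.2
    refine ((((hasDerivAt_id u).const_mul (1 - β)).const_sub 1).rpow_const
      (p := β / (1 - β)) (Or.inl hw.ne')).neg.congr_deriv ?_
    rw [f0CP_of_lt hβ1.ne hu.2, id]
    field_simp

lemma integral_mul_f0CP_of_lt_one (hβ0 : 0 < β) (hβ1 : β < 1) :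
    ∫ u in Ioi (0 : ℝ), u * f0CP β u = 1 := by
  have ha : 0 < 1 - β := by linarith
  have hp : 0 < β / (1 - β) := div_pos hβ0 ha
  rw [integral_Ioi_zero_eq_sub_of_hasDerivAt_of_nonneg (one_div_pos.2 ha).le
    (fun u hu => by rw [f0CP_of_le hβ1.ne hu, mul_zero])
    (G := fun u => -(u * (1 - (1 - β) * u) ^ (β / (1 - β))
      + (1 - (1 - β) * u) ^ (β / (1 - β) + 1)))
    (by have := Real.continuous_rpow_const hp.le
        have := Real.continuous_rpow_const (hp.le.trans (le_add_of_nonneg_right zero_le_one))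
        fun_prop) ?_
    (fun u hu => mul_nonneg hu.1.le (f0CP_nonneg hβ0.le hβ1.le u))]
  · simp [ha.ne', hp.ne', (hp.trans (lt_add_one _)).ne']
  · intro u hu
    have hw := one_sub_mul_pos_of_lt hβ1 hu.2
    have hw' : HasDerivAt (fun v => 1 - (1 - β) * v) (-(1 - β)) u := by
      simpa using ((hasDerivAt_id u).const_mul (1 - β)).const_sub 1
    refine (((hasDerivAt_id u).mul (hw'.rpow_const (Or.inl hw.ne'))).add
      (hw'.rpow_const (p := β / (1 - β) + 1) (Or.inl hw.ne'))).neg.congr_deriv ?_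
    rw [f0CP_of_lt hβ1.ne hu.2, add_sub_cancel_right,
      ← sub_add_cancel (β / (1 - β)) 1, rpow_add_one hw.ne', sub_add_cancel, id]
    field_simp
    ring

lemma integral_f0CP (hβ0 : 0 < β) (hβ1 : β ≤ 1) : ∫ u in Ioi (0 : ℝ), f0CP β u = 1 := by
  rcases hβ1.lt_or_eq with hβ1 | rfl
  · exact integral_f0CP_of_lt_one hβ0 hβ1
  · rw [f0CP_one, integral_exp_neg_Ioi_zero]

lemma integral_mul_f0CP (hβ0 : 0 < β) (hβ1 : β ≤ 1) :
    ∫ u in Ioi (0 : ℝ), u * f0CP β u = 1 := by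
  rcases hβ1.lt_or_eq with hβ1 | rfl
  · exact integral_mul_f0CP_of_lt_one hβ0 hβ1
  · rw [f0CP_one, ← Gamma_two, Gamma_eq_integral two_pos]
    norm_num [mul_comm]

lemma hasDerivAt_f0CP (hβ1 : β ≤ 1) {u : ℝ} (hu : 0 < 1 - (1 - β) * u) :
    ∃ f', HasDerivAt (f0CP β) f' u ∧ (1 - (1 - β) * u) * f' = (1 - 2 * β) * f0CP β u := by
  rcases hβ1.lt_or_eq with hβ1 | rfl
  · have hu' : u < 1 / (1 - β) := by
      rw [lt_div_iff₀ (by linarith)]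
      linarith
    have hloc : f0CP β =ᶠ[nhds u] fun v => β * (1 - (1 - β) * v) ^ (β / (1 - β) - 1) :=
      (eventually_lt_nhds hu').mono fun v hv => f0CP_of_lt hβ1.ne hv
    refine ⟨_, (((((hasDerivAt_id u).const_mul (1 - β)).const_sub 1).rpow_const
      (Or.inl hu.ne')).const_mul β).congr_of_eventuallyEq hloc, ?_⟩
    rw [f0CP_of_lt hβ1.ne hu', id, sub_sub, one_add_one_eq_two,
      show β / (1 - β) - 1 = β / (1 - β) - 2 + 1 by ring, rpow_add_one hu.ne']
    field_simp
    ring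
  · rw [f0CP_one]
    exact ⟨_, (hasDerivAt_neg u).exp, by ring⟩

end Profile

lemma hasDerivAt_selfSimilar {f L : ℝ → ℝ} {f' β t x : ℝ} (hL : HasDerivAt L β t)
    (hLt : L t ≠ 0) (hf : HasDerivAt f f' (x / L t))
    (hode : (1 - (1 - β) * (x / L t)) * f' = (1 - 2 * β) * f (x / L t)) :
    ∃ d, HasDerivAt (fun s => f (x / L s) / L s ^ 2) d t ∧
      HasDerivAt (fun y => (1 - y / L t) * (f (y / L t) / L t ^ 2)) d x := by
  refine ⟨_, (hf.comp t ((hasDerivAt_const t x).div hL hLt)).div (hL.pow 2) (pow_ne_zero 2 hLt),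
    (((hasDerivAt_id x).div_const (L t)).const_sub 1).mul
      ((hf.comp x ((hasDerivAt_id x).div_const (L t))).div_const (L t ^ 2)) |>.congr_deriv ?_⟩
  simp only [Function.comp_def, id, Pi.div_apply]
  field_simp at hode ⊢
  linear_combination hode

lemma LamCP_pos {β t : ℝ} (hβ : 0 ≤ β) (ht : 0 ≤ t) : 0 < LamCP β t := by
  unfold LamCP
  positivity

lemma hasDerivAt_LamCP (β t : ℝ) : HasDerivAt (LamCP β) β t :=
  (((hasDerivAt_id t).const_mul β).const_add 1).congr_deriv (mul_one β)

theorem carr_penrose_self_similar (β : ℝ) (hβ0 : 0 < β) (hβ1 : β ≤ 1) :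
    -- mass conservation constraint: ∫₀^∞ x c(x,t) dx = 1
    (∀ t : ℝ, 0 ≤ t → (∫ x in Set.Ioi (0 : ℝ), x * cCP β x t) = 1) ∧
    -- Λ(t) is the ratio of the first to the zeroth moment, and ⟨X_t⟩ = 1 + βt
    (∀ t : ℝ, 0 ≤ t →
      LamCP β t =
        (∫ x in Set.Ioi (0 : ℝ), x * cCP β x t) / (∫ x in Set.Ioi (0 : ℝ), cCP β x t)) ∧
    -- the Carr–Penrose equation ∂c/∂t = ∂/∂x[(1 - x/Λ(t)) c(x,t)] holds at interior points
    (∀ t x : ℝ, 0 ≤ t → 0 < x → (β = 1 ∨ x < LamCP β t / (1 - β)) →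
      ∃ d : ℝ,
        HasDerivAt (fun s => cCP β x s) d t ∧
        HasDerivAt (fun y => (1 - y / LamCP β t) * cCP β y t) d x) := by
  have hΛ : ∀ t, 0 ≤ t → 0 < LamCP β t := fun t ht => LamCP_pos hβ0.le ht
  have hmean : ∀ t, 0 ≤ t → ∫ x in Ioi (0 : ℝ), x * cCP β x t = 1 := fun t ht =>
    (integral_Ioi_zero_mul_rescale (f0CP β) (hΛ t ht)).trans (integral_mul_f0CP hβ0 hβ1)
  refine ⟨hmean, fun t ht => ?_, fun t x ht _ hin => ?_⟩
  · have hmass : ∫ x in Ioi (0 : ℝ), cCP β x t = 1 / LamCP β t :=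
      (integral_Ioi_zero_rescale (f0CP β) (hΛ t ht)).trans (by rw [integral_f0CP hβ0 hβ1])
    rw [hmean t ht, hmass, one_div_one_div]
  · have hu : 0 < 1 - (1 - β) * (x / LamCP β t) := by
      rcases hβ1.lt_or_eq with hβ1 | rfl
      · have hx := hin.resolve_left hβ1.ne
        rw [lt_div_iff₀ (sub_pos.2 hβ1)] at hx
        rw [mul_div_assoc', sub_pos, div_lt_one (hΛ t ht)]
        linarith
      · simp
    obtain ⟨f', hf', hode⟩ := hasDerivAt_f0CP hβ1 hu
    exact hasDerivAt_selfSimilar (hasDerivAt_LamCP β t) (hΛ t ht).ne' hf' hode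
end
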